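/- arXiv:2203.10598 — 6 statements merged into one kernel-verified Lean document; each statement's English description precedes it below -/
import Mathlib

section
/- For every α ∈ [0,1], every τ > 0, every λ > 0 and every real t > τ, one has (t−τ)^α · λ^α · (1+τλ)^{−t/τ} ≤ 1. -/
/-!
Write `x = (t - τ) λ`. For `0 ≤ α ≤ 1` one has `x ^ α ≤ max 1 x ≤ 1 + x ≤ 1 + t λ`, and Bernoulli's
inequality with exponent `t / τ ≥ 1` gives `1 + t λ ≤ (1 + τ λ) ^ (t / τ)`.
-/

open Real

lemma Real.rpow_le_one_add_self {x α : ℝ} (hx : 0 ≤ x) (hα₀ : 0 ≤ α) (hα₁ : α ≤ 1) :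
    x ^ α ≤ 1 + x := by
  rcases le_total x 1 with hx₁ | hx₁
  · linarith [rpow_le_one hx hx₁ hα₀]
  · calc x ^ α ≤ x ^ (1 : ℝ) := rpow_le_rpow_of_exponent_le hx₁ hα₁
      _ = x := rpow_one x
      _ ≤ 1 + x := by linarith

lemma Real.one_add_mul_le_one_add_mul_rpow {τ lam t : ℝ} (hτ : 0 < τ) (hlam : 0 ≤ lam)
    (ht : τ ≤ t) : 1 + t * lam ≤ (1 + τ * lam) ^ (t / τ) := by
  have bernoulli := one_add_mul_self_le_rpow_one_add (by nlinarith : -1 ≤ τ * lam)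
    ((one_le_div hτ).mpr ht)
  rwa [show t / τ * (τ * lam) = t * lam by field_simp] at bernoulli

/-- Per-eigenvalue uniform smoothing estimate: for `α ∈ [0,1]`, `τ > 0`, `λ > 0`, `t > τ`,
`(t−τ)^α · λ^α · (1+τλ)^{−t/τ} ≤ 1`. -/
theorem smoothing_per_eigenvalue (α τ lam t : ℝ) (hα : α ∈ Set.Icc (0:ℝ) 1)
    (hτ : 0 < τ) (hlam : 0 < lam) (ht : τ < t) :
    (t - τ) ^ α * lam ^ α * (1 + τ * lam) ^ (-(t / τ)) ≤ 1 := by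
  have hgap : 0 ≤ t - τ := by linarith
  have hbase : 0 < 1 + τ * lam := by positivity
  rw [← mul_rpow hgap hlam.le, rpow_neg hbase.le, ← div_eq_mul_inv,
    div_le_one (rpow_pos_of_pos hbase _)]
  calc ((t - τ) * lam) ^ α ≤ 1 + (t - τ) * lam :=
        rpow_le_one_add_self (by positivity) hα.1 hα.2
    _ ≤ 1 + t * lam := by nlinarith
    _ ≤ (1 + τ * lam) ^ (t / τ) := one_add_mul_le_one_add_mul_rpow hτ hlam.le ht.le
end

section
/- For every α ∈ [0,1] and all real numbers t > 0, τ > 0 and λ > 0, one has 1 − (1+τλ)^{−t/τ} ≤ (tλ)^α. -/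
/-!
Writing `(1 + τλ)^{-t/τ} = exp (-(t/τ) log (1 + τλ))`, the bounds `exp u ≥ 1 + u` and
`log (1 + s) ≤ s` give the Bernoulli-type inequality `(1 + τλ)^{-t/τ} ≥ 1 - tλ`. Since the
power is also positive, the increment is at most `min 1 (tλ)`, and `min 1 x ≤ x^α` for
`x ≥ 0` and `0 ≤ α ≤ 1`.
-/

namespace Real

theorem one_sub_mul_le_rpow_neg {s r : ℝ} (hs : -1 < s) (hr : 0 ≤ r) :
    1 - r * s ≤ (1 + s) ^ (-r) := by
  have hpos : 0 < 1 + s := by linarith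
  have hlog : log (1 + s) ≤ s := by linarith [log_le_sub_one_of_pos hpos]
  calc 1 - r * s ≤ log (1 + s) * -r + 1 := by nlinarith
    _ ≤ exp (log (1 + s) * -r) := add_one_le_exp _
    _ = (1 + s) ^ (-r) := (rpow_def_of_pos hpos _).symm

theorem min_one_le_rpow {x α : ℝ} (hx : 0 ≤ x) (hα₀ : 0 ≤ α) (hα₁ : α ≤ 1) :
    min 1 x ≤ x ^ α := by
  rcases le_total x 1 with hx₁ | hx₁
  · exact (min_le_right _ _).trans (self_le_rpow_of_le_one hx hx₁ hα₁)
  · exact (min_le_left _ _).trans (one_le_rpow hx₁ hα₀)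

end Real

/-- Per-eigenvalue increment estimate: for `α ∈ [0,1]`, `t, τ, λ > 0`,
`1 − (1+τλ)^{−t/τ} ≤ (tλ)^α`. -/
theorem increment_per_eigenvalue (α t τ lam : ℝ) (hα : α ∈ Set.Icc (0:ℝ) 1)
    (ht : 0 < t) (hτ : 0 < τ) (hlam : 0 < lam) :
    1 - (1 + τ * lam) ^ (-(t / τ)) ≤ (t * lam) ^ α := by
  have hbernoulli : 1 - t * lam ≤ (1 + τ * lam) ^ (-(t / τ)) := by
    have h := Real.one_sub_mul_le_rpow_neg (s := τ * lam) (by nlinarith) (div_pos ht hτ).le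
    rwa [show t / τ * (τ * lam) = t * lam by field_simp] at h
  have hpos : 0 ≤ (1 + τ * lam) ^ (-(t / τ)) := Real.rpow_nonneg (by positivity) _
  calc 1 - (1 + τ * lam) ^ (-(t / τ)) ≤ min 1 (t * lam) := le_min (by linarith) (by linarith)
    _ ≤ (t * lam) ^ α := Real.min_one_le_rpow (by positivity) hα.1 hα.2
end

section
/- Let λ > 0 and τ > 0, and set a = (1+τλ)^{−1}, σ² = τ(2+τλ)/(2(1+τλ)²) and v = 1/(2λ). Then the pushforward of the product measure (gaussian 0 v) ⊗ (gaussian 0 σ²) on ℝ×ℝ under the map (x, ξ) ↦ a·x + ξ equals gaussian 0 v, where gaussian m s denotes the real Gaussian measure with mean m and variance s. -/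
/-!
Under the product measure, `a x + ξ` is a sum of independent centred Gaussians, hence a centred
Gaussian of variance `a² v + σ²`; the noise variance `σ²` of the scheme is exactly `(1 - a²) v`.
-/

open MeasureTheory ProbabilityTheory
open scoped NNReal

lemma map_const_mul_add_prod_gaussianReal (c m₁ m₂ : ℝ) (v₁ v₂ : ℝ≥0) :
    ((gaussianReal m₁ v₁).prod (gaussianReal m₂ v₂)).map (fun p : ℝ × ℝ => c * p.1 + p.2)
      = gaussianReal (c * m₁ + m₂) (.mk (c ^ 2) (sq_nonneg c) * v₁ + v₂) := by
  have hsplit : (fun p : ℝ × ℝ => c * p.1 + p.2)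
      = (fun p : ℝ × ℝ => p.1 + p.2) ∘ Prod.map (c * ·) id := rfl
  rw [hsplit, ← Measure.map_map (by fun_prop) (by fun_prop),
    ← Measure.map_prod_map _ _ (by fun_prop) measurable_id, Measure.map_id,
    gaussianReal_map_const_mul]
  exact gaussianReal_conv_gaussianReal

lemma modifiedEuler_variance_balance {lam τ : ℝ} (hlam : lam ≠ 0) (hτlam : 1 + τ * lam ≠ 0) :
    (1 + τ * lam)⁻¹ ^ 2 * (1 / (2 * lam)) + τ * (2 + τ * lam) / (2 * (1 + τ * lam) ^ 2)
      = 1 / (2 * lam) := by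
  field_simp
  ring

/-- One Fourier mode of the preservation of the Gaussian invariant distribution by the
modified Euler scheme: with `a = (1+τλ)⁻¹`, `σ² = τ(2+τλ)/(2(1+τλ)²)` and `v = 1/(2λ)`,
the pushforward of `N(0,v) ⊗ N(0,σ²)` under `(x, ξ) ↦ a·x + ξ` is `N(0,v)`. -/
theorem modified_euler_preserves_gaussian (lam τ : ℝ) (hlam : 0 < lam) (hτ : 0 < τ) :
    Measure.map (fun p : ℝ × ℝ => (1 + τ * lam)⁻¹ * p.1 + p.2)
        ((gaussianReal 0 (1 / (2 * lam)).toNNReal).prod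
          (gaussianReal 0 (τ * (2 + τ * lam) / (2 * (1 + τ * lam) ^ 2)).toNNReal))
      = gaussianReal 0 (1 / (2 * lam)).toNNReal := by
  rw [map_const_mul_add_prod_gaussianReal, mul_zero, zero_add]
  congr 1
  apply NNReal.coe_injective
  have hv : (0 : ℝ) ≤ 1 / (2 * lam) := by positivity
  have hσ : (0 : ℝ) ≤ τ * (2 + τ * lam) / (2 * (1 + τ * lam) ^ 2) := by positivity
  rw [NNReal.coe_add, NNReal.coe_mul, NNReal.coe_mk, Real.coe_toNNReal _ hv,
    Real.coe_toNNReal _ hσ]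
  exact modifiedEuler_variance_balance (τ := τ) hlam.ne' (by positivity)
end

section
/- Let λ > 0 and τ > 0, and set v = 1/(2λ(1+τλ/2)). Then the pushforward of the product measure (gaussian 0 v) ⊗ (gaussian 0 τ) on ℝ×ℝ under the map (x, ξ) ↦ (1+τλ)^{−1}(x + ξ) equals gaussian 0 v, where gaussian m s denotes the real Gaussian measure with mean m and variance s. -/
/-!
The sum of independent `N(0, v)` and `N(0, τ)` variables is `N(0, v + τ)`, and multiplying by `c`
multiplies the variance by `c²`. So `N(0, v)` is invariant exactly when
`v = (1 + τλ)⁻² (v + τ)`, and `v = 1 / (2λ(1 + τλ/2))` solves this fixed-point equation.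
-/

open MeasureTheory ProbabilityTheory
open scoped NNReal

namespace ProbabilityTheory

lemma gaussianReal_prod_map_const_mul_add (c m₁ m₂ : ℝ) (v₁ v₂ : ℝ≥0) :
    ((gaussianReal m₁ v₁).prod (gaussianReal m₂ v₂)).map (fun p : ℝ × ℝ => c * (p.1 + p.2))
      = gaussianReal (c * (m₁ + m₂)) (.mk (c ^ 2) (sq_nonneg c) * (v₁ + v₂)) :=
  calc _ = ((gaussianReal m₁ v₁) ∗ (gaussianReal m₂ v₂)).map (c * ·) :=
        (Measure.map_map (measurable_const_mul c) (measurable_fst.add measurable_snd)).symm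
    _ = _ := by rw [gaussianReal_conv_gaussianReal, gaussianReal_map_const_mul]

end ProbabilityTheory

lemma euler_stationary_variance_eq {lam τ : ℝ} (hlam : 0 < lam) (hτ : 0 ≤ τ) :
    ((1 + τ * lam)⁻¹) ^ 2 * (1 / (2 * lam * (1 + τ * lam / 2)) + τ)
      = 1 / (2 * lam * (1 + τ * lam / 2)) := by
  field_simp
  ring

/-- One Fourier mode of the invariant Gaussian distribution of the standard Euler scheme:
with `v = 1/(2λ(1+τλ/2))`, the pushforward of `N(0,v) ⊗ N(0,τ)` under
`(x, ξ) ↦ (1+τλ)⁻¹ (x+ξ)` is `N(0,v)`. -/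
theorem standard_euler_invariant_gaussian (lam τ : ℝ) (hlam : 0 < lam) (hτ : 0 < τ) :
    Measure.map (fun p : ℝ × ℝ => (1 + τ * lam)⁻¹ * (p.1 + p.2))
        ((gaussianReal 0 (1 / (2 * lam * (1 + τ * lam / 2))).toNNReal).prod
          (gaussianReal 0 τ.toNNReal))
      = gaussianReal 0 (1 / (2 * lam * (1 + τ * lam / 2))).toNNReal := by
  rw [gaussianReal_prod_map_const_mul_add, add_zero, mul_zero]
  congr 1
  ext
  have hv : 0 ≤ 1 / (2 * lam * (1 + τ * lam / 2)) := by positivity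
  simp only [NNReal.coe_mul, NNReal.coe_mk, NNReal.coe_add, Real.coe_toNNReal _ hv,
    Real.coe_toNNReal _ hτ.le]
  exact euler_stationary_variance_eq hlam hτ.le
end

section
/- For all real numbers λ > 0 and s > 0, one has (√(s(2+λs)/2)/(1+λs) − 1/√(2λ))² ≤ 1/(2λ(1+λs)⁴). -/
/-! With `x = (1 + λs)⁻²` one has `s(2 + λs)/2 = (1 - x)(1 + λs)²/(2λ)`, so the left side is
`(√(1 - x) - 1)²/(2λ)` and the right side is `x²/(2λ)`; the claim then follows from
`1 - x ≤ √(1 - x) ≤ 1`. -/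

theorem sq_sqrt_one_sub_sub_one_le {x : ℝ} (hx : 0 ≤ x) : (√(1 - x) - 1) ^ 2 ≤ x ^ 2 := by
  have hlower : 1 - x ≤ √(1 - x) := Real.le_sqrt_self_iff.mpr (by linarith)
  have hupper : √(1 - x) ≤ 1 := Real.sqrt_le_one.mpr (by linarith)
  exact sq_le_sq' (by linarith) (by linarith)

/-- Per-mode estimate for the asymptotic preserving scheme:
`(√(s(2+λs)/2)/(1+λs) − 1/√(2λ))² ≤ 1/(2λ(1+λs)⁴)` for `λ, s > 0`. -/
theorem AP_per_mode_estimate (lam s : ℝ) (hlam : 0 < lam) (hs : 0 < s) :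
    (Real.sqrt (s * (2 + lam * s) / 2) / (1 + lam * s) - 1 / Real.sqrt (2 * lam)) ^ 2 ≤
      1 / (2 * lam * (1 + lam * s) ^ 4) := by
  have ha : 0 < 1 + lam * s := by positivity
  set x := 1 / (1 + lam * s) ^ 2 with hx
  have hsqrt : √(s * (2 + lam * s) / 2) / (1 + lam * s) = √(1 - x) / √(2 * lam) := by
    rw [← Real.sqrt_div' _ (by positivity), ← Real.sqrt_sq ha.le, ← Real.sqrt_div' _ (by positivity),
      hx]
    congr 1
    field_simp
    ring
  calc (√(s * (2 + lam * s) / 2) / (1 + lam * s) - 1 / √(2 * lam)) ^ 2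
      = (√(1 - x) - 1) ^ 2 / (2 * lam) := by
        rw [hsqrt, div_sub_div_same, div_pow, Real.sq_sqrt (by positivity)]
    _ ≤ x ^ 2 / (2 * lam) := by
        gcongr ?_ / _
        exact sq_sqrt_one_sub_sub_one_le (by positivity)
    _ = 1 / (2 * lam * (1 + lam * s) ^ 4) := by
        rw [hx]
        field_simp
end

section
/- Let (λ_j)_{j≥0} be a sequence of positive real numbers with Σ_j 1/λ_j < ∞, and let τ > 0. Then Σ_j (√((τ/ε)(2+λ_jτ/ε)/2)/(1+λ_jτ/ε) − 1/√(2λ_j))² tends to 0 as ε tends to 0 from the right. -/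
/-!
Each summand is `(b_j - c_j)²` with `c_j = 1/√(2λ_j)` and `0 ≤ b_j ≤ c_j`, because
`b_j² = (1 - (1 + λ_j τ/ε)⁻²) / (2λ_j)`. Hence the summands are dominated by the summable
`c_j² = 1/(2λ_j)`, tend to `0` individually as `τ/ε → ∞`, and dominated convergence for series
concludes.
-/

open Filter Topology

theorem tendsto_tsum_sq_sub_of_nonneg_of_le {α ι : Type*} {l : Filter α} {f : ι → α → ℝ}
    {c : ι → ℝ} (hc : Summable fun j => c j ^ 2) (hf : ∀ j, Tendsto (f j) l (𝓝 (c j)))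
    (hfc : ∀ᶠ x in l, ∀ j, 0 ≤ f j x ∧ f j x ≤ c j) :
    Tendsto (fun x => ∑' j, (f j x - c j) ^ 2) l (𝓝 0) := by
  have hlim : ∀ j, Tendsto (fun x => (f j x - c j) ^ 2) l (𝓝 0) := fun j => by
    simpa using ((hf j).sub_const (c j)).pow 2
  have hbound : ∀ᶠ x in l, ∀ j, ‖(f j x - c j) ^ 2‖ ≤ c j ^ 2 := by
    filter_upwards [hfc] with x hx j
    rw [Real.norm_of_nonneg (sq_nonneg _)]
    exact sq_le_sq' (by linarith [hx j]) (by linarith [hx j])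
  simpa using tendsto_tsum_of_dominated_convergence hc hlim hbound

/-- The eigenvalue `√s ℬ_s` on the `λ`-eigenspace of `Λ`, where `ℬ_s² = (2 + sΛ)(1 + sΛ)⁻² / 2`. -/
noncomputable def noiseGain (l s : ℝ) : ℝ :=
  √(s * (2 + l * s) / 2) / (1 + l * s)

namespace noiseGain

variable {l s : ℝ}

theorem nonneg (hl : 0 ≤ l) (hs : 0 ≤ s) : 0 ≤ noiseGain l s := by
  unfold noiseGain
  positivity

theorem eq_sqrt (hl : l ≠ 0) (hs : 0 < 1 + l * s) :
    noiseGain l s = √((1 - ((1 + l * s) ^ 2)⁻¹) / (2 * l)) := by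
  -- `(1 + l s)² - 1 = l s (2 + l s)`
  have h : (1 - ((1 + l * s) ^ 2)⁻¹) / (2 * l) = s * (2 + l * s) / 2 / (1 + l * s) ^ 2 := by
    field_simp
    ring
  rw [noiseGain, h, Real.sqrt_div' _ (sq_nonneg _), Real.sqrt_sq hs.le]

theorem le_one_div_sqrt (hl : 0 < l) (hs : 0 ≤ s) : noiseGain l s ≤ 1 / √(2 * l) := by
  rw [eq_sqrt hl.ne' (by positivity), one_div (√_), ← Real.sqrt_inv, div_eq_mul_inv]
  exact Real.sqrt_le_sqrt <| mul_le_of_le_one_left (by positivity) <|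
    sub_le_self _ (by positivity)

theorem tendsto_atTop (hl : 0 < l) :
    Tendsto (noiseGain l) atTop (𝓝 (1 / √(2 * l))) := by
  have hlin : Tendsto (fun s => 1 + l * s) atTop atTop :=
    tendsto_atTop_add_const_left _ _ (tendsto_id.const_mul_atTop hl)
  have hsq : Tendsto (fun s => ((1 + l * s) ^ 2)⁻¹) atTop (𝓝 0) :=
    (tendsto_pow_atTop two_ne_zero |>.comp hlin).inv_tendsto_atTop
  have hlim : Tendsto (fun s => √((1 - ((1 + l * s) ^ 2)⁻¹) / (2 * l))) atTop
      (𝓝 (1 / √(2 * l))) := by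
    rw [one_div (√_), ← Real.sqrt_inv, ← one_div]
    simpa using ((hsq.const_sub 1).div_const (2 * l)).sqrt
  refine hlim.congr' ?_
  filter_upwards [eventually_ge_atTop 0] with s hs
  exact (eq_sqrt hl.ne' (by positivity)).symm

end noiseGain

/-- Hilbert–Schmidt convergence identifying the limiting scheme of the asymptotic
preserving discretization: if `λ_j > 0` with `Σ_j 1/λ_j < ∞` and `τ > 0`, then
`Σ_j (√((τ/ε)(2+λ_j τ/ε)/2)/(1+λ_j τ/ε) − 1/√(2λ_j))² → 0` as `ε → 0⁺`. -/
theorem AP_HilbertSchmidt_convergence (lam : ℕ → ℝ) (hpos : ∀ j, 0 < lam j)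
    (hsum : Summable fun j => 1 / lam j) (τ : ℝ) (hτ : 0 < τ) :
    Filter.Tendsto
      (fun ε : ℝ => ∑' j,
        (Real.sqrt ((τ / ε) * (2 + lam j * (τ / ε)) / 2) / (1 + lam j * (τ / ε)) -
          1 / Real.sqrt (2 * lam j)) ^ 2)
      (nhdsWithin 0 (Set.Ioi 0)) (nhds 0) := by
  have hτε : Tendsto (fun ε : ℝ => τ / ε) (𝓝[>] 0) atTop :=
    tendsto_inv_nhdsGT_zero.const_mul_atTop hτ
  have hc : Summable fun j => (1 / √(2 * lam j)) ^ 2 := by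
    refine (hsum.div_const 2).congr fun j => ?_
    rw [div_pow, one_pow, Real.sq_sqrt (by linarith [hpos j]), div_div, mul_comm]
  refine tendsto_tsum_sq_sub_of_nonneg_of_le (f := fun j ε => noiseGain (lam j) (τ / ε)) hc
    (fun j => (noiseGain.tendsto_atTop (hpos j)).comp hτε) ?_
  filter_upwards [self_mem_nhdsWithin] with ε (hε : 0 < ε) j
  have hs : 0 ≤ τ / ε := by positivity
  exact ⟨noiseGain.nonneg (hpos j).le hs, noiseGain.le_one_div_sqrt (hpos j) hs⟩
end
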